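/- Let k be a field, G a group, and V a k-vector space equipped with a k-linear representation of G. Let K be a subgroup of G and z an element of G such that z⁻¹gz ∈ K for every g ∈ K (i.e. K is contained in zKz⁻¹). If the subspace V^K of K-fixed vectors is finite-dimensional over k, then for every natural number n one has V^{z^n K z^{-n}} = V^K; in particular, every element of z^n K z^{-n}, for any n, fixes every vector of V^K. -/
import Mathlib



variable {k G V : Type*}

/-- The subspace of vectors fixed by every element of a subgroup `H`. -/
def fixedVectors [Field k] [Group G] [AddCommGroup V] [Module k V]
    (ρ : Representation k G V) (H : Subgroup G) : Submodule k V where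
  carrier := {v | ∀ g ∈ H, ρ g v = v}
  add_mem' := fun {a b} ha hb g hg => by rw [map_add, ha g hg, hb g hg]
  zero_mem' := fun g hg => by simp
  smul_mem' := fun c v hv g hg => by rw [map_smul, hv g hg]

/-- If `K ⊆ zKz⁻¹` and the space of `K`-fixed vectors is finite-dimensional, then for every
`n` the space of `zⁿKz⁻ⁿ`-fixed vectors equals the space of `K`-fixed vectors; in particular
every element of any conjugate `zⁿKz⁻ⁿ` fixes every `K`-fixed vector. -/
theorem fixedVectors_conj_eq_of_finiteDimensional
    [Field k] [Group G] [AddCommGroup V] [Module k V]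
    (ρ : Representation k G V) (K : Subgroup G) (z : G)
    (hz : ∀ g ∈ K, z⁻¹ * g * z ∈ K)
    (hfd : FiniteDimensional k (fixedVectors ρ K)) :
    (∀ n : ℕ, fixedVectors ρ (Subgroup.map (MulAut.conj (z ^ n)).toMonoidHom K)
        = fixedVectors ρ K) ∧
    (∀ n : ℕ, ∀ g ∈ Subgroup.map (MulAut.conj (z ^ n)).toMonoidHom K,
        ∀ v ∈ fixedVectors ρ K, ρ g v = v) := by
  -- z⁻ⁿ K zⁿ ⊆ K
  have hK : ∀ n : ℕ, ∀ g ∈ K, (z ^ n)⁻¹ * g * z ^ n ∈ K := by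
    intro n
    induction n with
    | zero => intro g hg; simpa using hg
    | succ m ih =>
      intro g hg
      have := hz _ (ih g hg)
      have heq : z⁻¹ * ((z ^ m)⁻¹ * g * z ^ m) * z
          = (z ^ (m + 1))⁻¹ * g * z ^ (m + 1) := by
        group
      rwa [heq] at this
  have key : ∀ n : ℕ,
      fixedVectors ρ (Subgroup.map (MulAut.conj (z ^ n)).toMonoidHom K)
        = fixedVectors ρ K := by
    intro n
    set a := z ^ n with ha
    -- K ≤ a K a⁻¹
    have hle : K ≤ Subgroup.map (MulAut.conj a).toMonoidHom K := by
      intro g hg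
      refine ⟨a⁻¹ * g * a, hK n g hg, ?_⟩
      simp [MulAut.conj_apply, mul_assoc]
    -- fixed vectors are antitone
    have hfix_le : fixedVectors ρ (Subgroup.map (MulAut.conj a).toMonoidHom K)
        ≤ fixedVectors ρ K := fun v hv g hg => hv g (hle hg)
    -- ρ a as a linear equiv
    let e : V ≃ₗ[k] V := LinearEquiv.ofLinear (ρ a) (ρ a⁻¹)
      (by rw [← Module.End.mul_eq_comp, ← map_mul, mul_inv_cancel, map_one]; rfl)
      (by rw [← Module.End.mul_eq_comp, ← map_mul, inv_mul_cancel, map_one]; rfl)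
    -- fixed vectors of conjugate = image of fixed vectors under ρ a
    have hmap : fixedVectors ρ (Subgroup.map (MulAut.conj a).toMonoidHom K)
        = (fixedVectors ρ K).map (e : V →ₗ[k] V) := by
      ext v
      constructor
      · intro hv
        refine ⟨ρ a⁻¹ v, ?_, ?_⟩
        · intro g hg
          have h1 : ρ (a * g * a⁻¹) v = v :=
            hv _ ⟨g, hg, by simp [MulAut.conj_apply, mul_assoc]⟩
          have h2 : ρ a⁻¹ (ρ (a * g * a⁻¹) v) = ρ a⁻¹ v := by rw [h1]
          calc ρ g (ρ a⁻¹ v) = ρ (a⁻¹ * (a * g * a⁻¹)) v := by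
                have h3 : a⁻¹ * (a * g * a⁻¹) = g * a⁻¹ := by group
                rw [h3, map_mul, Module.End.mul_apply]
            _ = ρ a⁻¹ v := by
                rw [map_mul, Module.End.mul_apply]; exact h2
        · show ρ a (ρ a⁻¹ v) = v
          rw [← Module.End.mul_apply, ← map_mul, mul_inv_cancel, map_one,
            Module.End.one_apply]
      · rintro ⟨w, hw, rfl⟩
        rintro g ⟨g', hg', rfl⟩
        show ρ (a * g' * a⁻¹) (ρ a w) = ρ a w
        rw [← Module.End.mul_apply, ← map_mul]
        have h4 : a * g' * a⁻¹ * a = a * g' := by group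
        rw [h4, map_mul, Module.End.mul_apply, hw g' hg']
    -- equal finrank, contained, hence equal
    have hfr : Module.finrank k
        (fixedVectors ρ (Subgroup.map (MulAut.conj a).toMonoidHom K))
        = Module.finrank k (fixedVectors ρ K) := by
      rw [hmap, LinearEquiv.finrank_map_eq]
    exact Submodule.eq_of_le_of_finrank_le hfix_le (le_of_eq hfr.symm)
  refine ⟨key, fun n g hg v hv => ?_⟩
  rw [← key n] at hv
  exact hv g hg
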